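/- arXiv:2507.09283 — 7 statements merged into one kernel-verified Lean document; each statement's English description precedes it below -/
import Mathlib

section
/- Let G be an infinite simple graph in which every vertex has finite degree. Let S be a strongly optimal dominating set of G (i.e., |N[v] ∩ S| = 1 for every vertex v) and let T be any dominating set of G. Then there exists an injective map from S into T. -/
/-- If `S` is a strongly optimal dominating set (every vertex has exactly one
vertex of `S` in its closed neighborhood) of an infinite, locally finite graph `G`, and `T` is
any dominating set of `G`, then there is an injective map from `S` to `T`. -/
theorem stmt_0 {V : Type*} (G : SimpleGraph V) (hinf : Infinite V)
    (hfin : ∀ v : V, (G.neighborSet v).Finite)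
    (S T : Set V)
    (hS_dom : ∀ v : V, v ∉ S → ∃ u ∈ S, G.Adj v u)
    (hS_strong : ∀ v : V, ∃! u : V, u ∈ S ∧ u ∈ insert v (G.neighborSet v))
    (hT_dom : ∀ v : V, v ∉ T → ∃ u ∈ T, G.Adj v u) :
    ∃ f : S → T, Function.Injective f := by
  -- map each t ∈ T to the unique S-vertex in its closed neighborhood
  have g : ∀ t : T, {s : S // (s : V) ∈ insert (t : V) (G.neighborSet (t : V))} :=
    fun t => ⟨⟨(hS_strong (t : V)).choose, (hS_strong (t : V)).choose_spec.1.1⟩,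
      (hS_strong (t : V)).choose_spec.1.2⟩
  have hsurj : Function.Surjective (fun t : T => (g t).1) := by
    intro s
    by_cases hsT : (s : V) ∈ T
    · refine ⟨⟨s, hsT⟩, ?_⟩
      obtain ⟨u, _, huniq⟩ := hS_strong (s : V)
      have h1 : ((g ⟨s, hsT⟩).1 : V) = u :=
        huniq _ ⟨(g ⟨s, hsT⟩).1.2, (g ⟨s, hsT⟩).2⟩
      have h2 : (s : V) = u := huniq _ ⟨s.2, Set.mem_insert _ _⟩
      exact Subtype.ext (h1.trans h2.symm)
    · obtain ⟨t, htT, hadj⟩ := hT_dom s hsT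
      refine ⟨⟨t, htT⟩, ?_⟩
      obtain ⟨u, _, huniq⟩ := hS_strong t
      have h1 : ((g ⟨t, htT⟩).1 : V) = u :=
        huniq _ ⟨(g ⟨t, htT⟩).1.2, (g ⟨t, htT⟩).2⟩
      have h2 : (s : V) = u := huniq _ ⟨s.2, Set.mem_insert_of_mem _ hadj.symm⟩
      exact Subtype.ext (h1.trans h2.symm)
  exact ⟨Function.surjInv hsurj, Function.injective_surjInv hsurj⟩
end

section
/- The set S4 = {(x,y) ∈ ℤ×ℤ : x ≡ 2y (mod 5)} is strongly optimal for the infinite square grid T4: for every vertex v of T4, exactly one vertex of the closed neighborhood N[v] belongs to S4. Consequently the closed neighborhoods N[s], s ∈ S4, partition the vertex set of T4. -/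
/-- The infinite square grid: vertices `ℤ × ℤ`, with `(x,y)` adjacent to `(x',y')` iff
`|x−x'| + |y−y'| = 1`. -/
def T4 : SimpleGraph (ℤ × ℤ) where
  Adj p q := |p.1 - q.1| + |p.2 - q.2| = 1
  symm := by
    constructor
    intro p q h
    rw [abs_sub_comm q.1 p.1, abs_sub_comm q.2 p.2]
    exact h
  loopless := by
    constructor
    intro p h
    simp at h

/-- `S4 = {(x,y) : x ≡ 2y (mod 5)}`. -/
def S4 : Set (ℤ × ℤ) := {p | Int.ModEq 5 p.1 (2 * p.2)}

/-- The closed neighborhood `N[v]` in `T4`. -/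
def closedNbhdT4 (v : ℤ × ℤ) : Set (ℤ × ℤ) := insert v (T4.neighborSet v)

/-!
The linear form `x - 2y (mod 5)` takes the values `0, 1, -1, -2, 2` on the five offsets
`(0,0), (±1,0), (0,±1)` of a closed neighbourhood, that is, every residue exactly once; so each
`N[v]` meets `S4`, the zero set of the form, in exactly one point. As `u ∈ N[v] ↔ v ∈ N[u]`,
this says that the `N[s]`, `s ∈ S4`, cover the grid and are pairwise disjoint.
-/

section ExactlyOne

variable {α : Type*} {N : α → Set α} {S : Set α}

theorem iUnion_eq_univ_of_existsUnique (hN : ∀ u v, u ∈ N v ↔ v ∈ N u)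
    (hS : ∀ v, ∃! u, u ∈ S ∧ u ∈ N v) : (⋃ s ∈ S, N s) = Set.univ := by
  refine Set.eq_univ_of_forall fun v => ?_
  obtain ⟨u, ⟨huS, huv⟩, -⟩ := hS v
  exact Set.mem_biUnion huS ((hN u v).mp huv)

theorem pairwiseDisjoint_of_existsUnique (hN : ∀ u v, u ∈ N v ↔ v ∈ N u)
    (hS : ∀ v, ∃! u, u ∈ S ∧ u ∈ N v) : S.PairwiseDisjoint N := by
  intro s hs t ht hst
  refine Set.disjoint_left.mpr fun v hsv htv => hst ?_
  exact (hS v).unique ⟨hs, (hN v s).mp hsv⟩ ⟨ht, (hN v t).mp htv⟩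

end ExactlyOne

theorem mem_S4_iff (u : ℤ × ℤ) : u ∈ S4 ↔ (u.1 - 2 * u.2) % 5 = 0 := by
  simp only [S4, Set.mem_ofPred_eq, Int.ModEq]
  omega

theorem mem_closedNbhdT4_iff (u v : ℤ × ℤ) :
    u ∈ closedNbhdT4 v ↔
      u = v ∨ u = v + (1, 0) ∨ u = v + (-1, 0) ∨ u = v + (0, 1) ∨ u = v + (0, -1) := by
  simp only [closedNbhdT4, Set.mem_insert_iff, SimpleGraph.mem_neighborSet, T4, Prod.ext_iff,
    Prod.fst_add, Prod.snd_add, Int.abs_eq_natAbs]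
  omega

theorem mem_closedNbhdT4_comm (u v : ℤ × ℤ) : u ∈ closedNbhdT4 v ↔ v ∈ closedNbhdT4 u := by
  simp only [mem_closedNbhdT4_iff, Prod.ext_iff, Prod.fst_add, Prod.snd_add]
  omega

theorem exists_mem_S4_mem_closedNbhdT4 (v : ℤ × ℤ) : ∃ u ∈ S4, u ∈ closedNbhdT4 v := by
  simp only [mem_S4_iff, mem_closedNbhdT4_iff]
  obtain h | h | h | h | h : (v.1 - 2 * v.2) % 5 = 0 ∨ (v.1 - 2 * v.2) % 5 = 1 ∨
      (v.1 - 2 * v.2) % 5 = 2 ∨ (v.1 - 2 * v.2) % 5 = 3 ∨ (v.1 - 2 * v.2) % 5 = 4 := by omega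
  · exact ⟨v, by omega, by simp⟩
  · exact ⟨v + (-1, 0), by simp only [Prod.fst_add, Prod.snd_add]; omega, by simp⟩
  · exact ⟨v + (0, 1), by simp only [Prod.fst_add, Prod.snd_add]; omega, by simp⟩
  · exact ⟨v + (0, -1), by simp only [Prod.fst_add, Prod.snd_add]; omega, by simp⟩
  · exact ⟨v + (1, 0), by simp only [Prod.fst_add, Prod.snd_add]; omega, by simp⟩

theorem eq_of_mem_S4_of_mem_closedNbhdT4 {u w v : ℤ × ℤ} (hu : u ∈ S4) (hw : w ∈ S4)
    (huv : u ∈ closedNbhdT4 v) (hwv : w ∈ closedNbhdT4 v) : u = w := by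
  rw [mem_S4_iff] at hu hw
  rw [mem_closedNbhdT4_iff] at huv hwv
  simp only [Prod.ext_iff, Prod.fst_add, Prod.snd_add] at huv hwv ⊢
  omega

theorem existsUnique_mem_S4_mem_closedNbhdT4 (v : ℤ × ℤ) :
    ∃! u : ℤ × ℤ, u ∈ S4 ∧ u ∈ closedNbhdT4 v := by
  obtain ⟨u, hu, huv⟩ := exists_mem_S4_mem_closedNbhdT4 v
  exact ⟨u, ⟨hu, huv⟩, fun w ⟨hw, hwv⟩ => eq_of_mem_S4_of_mem_closedNbhdT4 hw hu hwv huv⟩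

/-- `S4` is strongly optimal for `T4`: every vertex has exactly one vertex of
`S4` in its closed neighborhood; consequently the closed neighborhoods `N[s]`, `s ∈ S4`,
partition the vertex set. -/
theorem stmt_4 :
    (∀ v : ℤ × ℤ, ∃! u : ℤ × ℤ, u ∈ S4 ∧ u ∈ closedNbhdT4 v) ∧
    (⋃ s ∈ S4, closedNbhdT4 s) = Set.univ ∧
    S4.PairwiseDisjoint closedNbhdT4 :=
  ⟨existsUnique_mem_S4_mem_closedNbhdT4,
    iUnion_eq_univ_of_existsUnique mem_closedNbhdT4_comm existsUnique_mem_S4_mem_closedNbhdT4,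
    pairwiseDisjoint_of_existsUnique mem_closedNbhdT4_comm existsUnique_mem_S4_mem_closedNbhdT4⟩
end

section
/- The set S3 = L ∪ {(x−1, y) : (x,y) ∈ L}, where L = {(x,y) ∈ ℤ×ℤ : x ≡ y (mod 4) and x + 3y ≡ 0 (mod 8)}, is a dominating set of the infinite hexagonal grid T3: every vertex of T3 not in S3 is adjacent to a vertex of S3. -/
/-- The infinite hexagonal grid: vertices `ℤ × ℤ`; `(x,y)` is adjacent to `(x,y+1)` and
`(x,y−1)`, and additionally to `(x+1,y)` when `x+y` is even (equivalently, to `(x−1,y)` when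
`x+y` is odd). -/
def T3 : SimpleGraph (ℤ × ℤ) where
  Adj p q :=
    (p.1 = q.1 ∧ (q.2 = p.2 + 1 ∨ p.2 = q.2 + 1)) ∨
    (p.2 = q.2 ∧ ((Even (p.1 + p.2) ∧ q.1 = p.1 + 1) ∨ (Even (q.1 + q.2) ∧ p.1 = q.1 + 1)))
  symm := by
    constructor
    rintro p q (⟨h1, h2 | h2⟩ | ⟨h1, h2 | h2⟩)
    · exact Or.inl ⟨h1.symm, Or.inr h2⟩
    · exact Or.inl ⟨h1.symm, Or.inl h2⟩
    · exact Or.inr ⟨h1.symm, Or.inr h2⟩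
    · exact Or.inr ⟨h1.symm, Or.inl h2⟩
  loopless := by
    constructor
    rintro p (⟨h1, h2 | h2⟩ | ⟨h1, ⟨_, h2⟩ | ⟨_, h2⟩⟩) <;> omega

/-- The lattice `L = {(x,y) : x ≡ y (mod 4), x + 3y ≡ 0 (mod 8)}` (generated by `(2,2)` and
`(3,−1)`). -/
def L : Set (ℤ × ℤ) := {p | Int.ModEq 4 p.1 p.2 ∧ Int.ModEq 8 (p.1 + 3 * p.2) 0}

/-- `S3 = L ∪ {(x−1, y) : (x,y) ∈ L}`. -/
def S3 : Set (ℤ × ℤ) := L ∪ (fun p : ℤ × ℤ => (p.1 - 1, p.2)) '' L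

/-!
The congruence `x + 3y ≡ 0 (mod 8)` already forces `x ≡ y (mod 4)`, so `S3` is the set of
vertices with `x + 3y ≡ 0` or `7 (mod 8)`. A vertical step changes `x + 3y` by `±3`; the
horizontal step changes it by `+1` when `x + 3y` is even and by `-1` when it is odd (as
`x + y ≡ x + 3y (mod 2)`). Hence every residue from `1` to `6` reaches `0` or `7` in one step.
-/

theorem mem_L_iff {p : ℤ × ℤ} : p ∈ L ↔ (p.1 + 3 * p.2) % 8 = 0 := by
  simp only [L, Set.mem_ofPred_eq, Int.ModEq]
  omega

theorem mem_S3_iff {p : ℤ × ℤ} :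
    p ∈ S3 ↔ (p.1 + 3 * p.2) % 8 = 0 ∨ (p.1 + 3 * p.2) % 8 = 7 := by
  simp only [S3, Set.mem_union, Set.mem_image, mem_L_iff, Prod.exists, Prod.ext_iff]
  constructor
  · rintro (h | ⟨a, b, h, ha, hb⟩) <;> omega
  · rintro (h | h)
    · exact Or.inl h
    · exact Or.inr ⟨p.1 + 1, p.2, by omega, by omega, rfl⟩

namespace T3

variable {x y : ℤ}

theorem adj_up : T3.Adj (x, y) (x, y + 1) :=
  Or.inl ⟨rfl, Or.inl rfl⟩

theorem adj_down : T3.Adj (x, y) (x, y - 1) :=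
  Or.inl ⟨rfl, Or.inr (sub_add_cancel y 1).symm⟩

theorem adj_right (h : Even (x + y)) : T3.Adj (x, y) (x + 1, y) :=
  Or.inr ⟨rfl, Or.inl ⟨h, rfl⟩⟩

theorem adj_left (h : Odd (x + y)) : T3.Adj (x, y) (x - 1, y) :=
  Or.inr ⟨rfl, Or.inr ⟨by simpa only [sub_add_eq_add_sub] using h.sub_odd odd_one, by ring⟩⟩

end T3

/-- `S3` is a dominating set of the infinite hexagonal grid `T3`. -/
theorem stmt_8 : ∀ p : ℤ × ℤ, p ∉ S3 → ∃ q ∈ S3, T3.Adj p q := by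
  rintro ⟨x, y⟩ hp
  rw [mem_S3_iff] at hp
  obtain h | h | h | h | h | h : (x + 3 * y) % 8 = 1 ∨ (x + 3 * y) % 8 = 2 ∨
      (x + 3 * y) % 8 = 3 ∨ (x + 3 * y) % 8 = 4 ∨ (x + 3 * y) % 8 = 5 ∨ (x + 3 * y) % 8 = 6 := by
    omega
  · exact ⟨_, mem_S3_iff.2 (by omega), T3.adj_left (Int.odd_iff.2 (by omega))⟩
  · exact ⟨_, mem_S3_iff.2 (by omega), T3.adj_down⟩
  · exact ⟨_, mem_S3_iff.2 (by omega), T3.adj_down⟩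
  · exact ⟨_, mem_S3_iff.2 (by omega), T3.adj_up⟩
  · exact ⟨_, mem_S3_iff.2 (by omega), T3.adj_up⟩
  · exact ⟨_, mem_S3_iff.2 (by omega), T3.adj_right (Int.even_iff.2 (by omega))⟩
end

section
/- The set S6 = {(x,y) ∈ ℤ×ℤ : x ≡ 3y (mod 7)} is a dominating set of the infinite triangular grid T6: every vertex of T6 not in S6 is adjacent to a vertex of S6. -/
/-- The infinite triangular grid: vertices `ℤ × ℤ`, with `(x,y)` adjacent to `(x',y')` iff
`(x'−x, y'−y) ∈ {(1,0),(−1,0),(0,1),(0,−1),(1,1),(−1,−1)}`. -/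
def T6 : SimpleGraph (ℤ × ℤ) where
  Adj p q :=
    (q.1 - p.1 = 1 ∧ q.2 - p.2 = 0) ∨ (q.1 - p.1 = -1 ∧ q.2 - p.2 = 0) ∨
    (q.1 - p.1 = 0 ∧ q.2 - p.2 = 1) ∨ (q.1 - p.1 = 0 ∧ q.2 - p.2 = -1) ∨
    (q.1 - p.1 = 1 ∧ q.2 - p.2 = 1) ∨ (q.1 - p.1 = -1 ∧ q.2 - p.2 = -1)
  symm := by
    constructor
    intro p q h
    omega
  loopless := by
    constructor
    intro p h
    omega

/-- `S6 = {(x,y) : x ≡ 3y (mod 7)}`. -/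
def S6 : Set (ℤ × ℤ) := {p | Int.ModEq 7 p.1 (3 * p.2)}

/-!
The map `(x, y) ↦ x - 3y` into `ZMod 7` is additive and `S6` is its kernel. The six neighbour
offsets of `T6` are sent to `1, -1, -3, 3, -2, 2`, i.e. onto the six nonzero residues, so a
vertex `p ∉ S6` has a neighbour `p + d` whose offset `d` cancels the residue of `p`.
-/

def residue7 : ℤ × ℤ →+ ZMod 7 where
  toFun p := p.1 - 3 * p.2
  map_zero' := by simp
  map_add' p q := by simp only [Prod.fst_add, Prod.snd_add]; push_cast; ring

def hexOffsets : Finset (ℤ × ℤ) := {(1, 0), (-1, 0), (0, 1), (0, -1), (1, 1), (-1, -1)}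

theorem mem_S6_iff_residue7_eq_zero {p : ℤ × ℤ} : p ∈ S6 ↔ residue7 p = 0 := by
  have h := ZMod.intCast_eq_intCast_iff p.1 (3 * p.2) 7
  push_cast at h
  simpa [S6, residue7, sub_eq_zero] using h.symm

theorem T6_adj_iff_sub_mem_hexOffsets {p q : ℤ × ℤ} : T6.Adj p q ↔ q - p ∈ hexOffsets := by
  simp only [T6, hexOffsets, Finset.mem_insert, Finset.mem_singleton, Prod.ext_iff,
    Prod.fst_sub, Prod.snd_sub]

theorem exists_mem_hexOffsets_residue7_eq {c : ZMod 7} (hc : c ≠ 0) :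
    ∃ d ∈ hexOffsets, residue7 d = c := by
  revert c
  decide

/-- `S6` is a dominating set of the infinite triangular grid `T6`. -/
theorem stmt_11 : ∀ p : ℤ × ℤ, p ∉ S6 → ∃ q ∈ S6, T6.Adj p q := by
  intro p hp
  rw [mem_S6_iff_residue7_eq_zero] at hp
  obtain ⟨d, hd, hres⟩ := exists_mem_hexOffsets_residue7_eq (neg_ne_zero.mpr hp)
  refine ⟨p + d, ?_, ?_⟩
  · rw [mem_S6_iff_residue7_eq_zero, map_add, hres, add_neg_cancel]
  · rwa [T6_adj_iff_sub_mem_hexOffsets, add_sub_cancel_left]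
end

section
/- The set S6 = {(x,y) ∈ ℤ×ℤ : x ≡ 3y (mod 7)} is strongly optimal for the infinite triangular grid T6: for every vertex v of T6, exactly one vertex of the closed neighborhood N[v] belongs to S6. Consequently the closed neighborhoods N[s], s ∈ S6, partition the vertex set of T6. -/
/-- The closed neighborhood `N[v]` in `T6`. -/
def closedNbhdT6 (v : ℤ × ℤ) : Set (ℤ × ℤ) := insert v (T6.neighborSet v)

/-! The linear form `(x, y) ↦ x - 3y` modulo 7 takes the values `0, 1, -1, -3, 3, -2, 2`, i.e. every
residue exactly once, on the seven offsets of a closed neighbourhood. Hence every `N[v]` contains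
exactly one zero of the form, which is the defining condition of `S6`. Since `u ∈ N[v] ↔ v ∈ N[u]`,
this says that the `N[s]`, `s ∈ S6`, cover the grid and are pairwise disjoint. -/

def closedNbhdOffsets : Finset (ℤ × ℤ) :=
  {(0, 0), (1, 0), (-1, 0), (0, 1), (0, -1), (1, 1), (-1, -1)}

def s6Residue : ℤ × ℤ →+ ZMod 7 :=
  AddMonoidHom.mk' (fun p => ((p.1 - 3 * p.2 : ℤ) : ZMod 7))
    (by intros; simp only [Prod.fst_add, Prod.snd_add]; push_cast; ring)

theorem s6Residue_injOn_closedNbhdOffsets : Set.InjOn s6Residue closedNbhdOffsets := by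
  decide

theorem exists_mem_closedNbhdOffsets_s6Residue_eq (a : ZMod 7) :
    ∃ d ∈ closedNbhdOffsets, s6Residue d = a := by
  revert a
  decide

theorem mem_closedNbhdT6_iff {u v : ℤ × ℤ} : u ∈ closedNbhdT6 v ↔ u - v ∈ closedNbhdOffsets := by
  simp only [closedNbhdT6, Set.mem_insert_iff, SimpleGraph.mem_neighborSet, T6, closedNbhdOffsets,
    Finset.mem_insert, Finset.mem_singleton, Prod.ext_iff, Prod.fst_sub, Prod.snd_sub]
  omega

theorem mem_S6_iff {u : ℤ × ℤ} : u ∈ S6 ↔ s6Residue u = 0 := by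
  change u.1 % 7 = 3 * u.2 % 7 ↔ ((u.1 - 3 * u.2 : ℤ) : ZMod 7) = 0
  rw [ZMod.intCast_zmod_eq_zero_iff_dvd]
  omega

theorem mem_closedNbhdT6_comm (u v : ℤ × ℤ) : u ∈ closedNbhdT6 v ↔ v ∈ closedNbhdT6 u := by
  simp [closedNbhdT6, eq_comm, T6.adj_comm]

theorem existsUnique_mem_S6_mem_closedNbhdT6 (v : ℤ × ℤ) :
    ∃! u : ℤ × ℤ, u ∈ S6 ∧ u ∈ closedNbhdT6 v := by
  obtain ⟨d, hd, hd_residue⟩ := exists_mem_closedNbhdOffsets_s6Residue_eq (-s6Residue v)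
  refine ⟨v + d, ⟨?_, ?_⟩, ?_⟩
  · rw [mem_S6_iff, map_add, hd_residue, add_neg_cancel]
  · rwa [mem_closedNbhdT6_iff, add_sub_cancel_left]
  · rintro u ⟨hu, huv⟩
    rw [mem_closedNbhdT6_iff] at huv
    have hu_residue : s6Residue (u - v) = s6Residue d := by
      rw [map_sub, hd_residue, mem_S6_iff.mp hu, zero_sub]
    rw [← s6Residue_injOn_closedNbhdOffsets huv hd hu_residue, add_sub_cancel]

section SymmetricNeighborhoods

variable {α : Type*} {S : Set α} {N : α → Set α}

theorem biUnion_eq_univ_of_inter_nonempty (hN : ∀ u v, u ∈ N v ↔ v ∈ N u)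
    (h : ∀ v, (S ∩ N v).Nonempty) : ⋃ s ∈ S, N s = Set.univ := by
  refine Set.eq_univ_of_forall fun v => ?_
  obtain ⟨s, hs, hsv⟩ := h v
  exact Set.mem_biUnion hs ((hN s v).mp hsv)

theorem pairwiseDisjoint_of_inter_subsingleton (hN : ∀ u v, u ∈ N v ↔ v ∈ N u)
    (h : ∀ v, (S ∩ N v).Subsingleton) : S.PairwiseDisjoint N := by
  intro s hs t ht hst
  refine Set.disjoint_left.mpr fun v hsv htv => hst ?_
  exact h v ⟨hs, (hN v s).mp hsv⟩ ⟨ht, (hN v t).mp htv⟩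

end SymmetricNeighborhoods

/-- `S6` is strongly optimal for `T6`: every vertex has exactly one vertex of
`S6` in its closed neighborhood; consequently the closed neighborhoods `N[s]`, `s ∈ S6`,
partition the vertex set. -/
theorem stmt_12 :
    (∀ v : ℤ × ℤ, ∃! u : ℤ × ℤ, u ∈ S6 ∧ u ∈ closedNbhdT6 v) ∧
    (⋃ s ∈ S6, closedNbhdT6 s) = Set.univ ∧
    S6.PairwiseDisjoint closedNbhdT6 := by
  refine ⟨existsUnique_mem_S6_mem_closedNbhdT6, ?_, ?_⟩
  · exact biUnion_eq_univ_of_inter_nonempty mem_closedNbhdT6_comm fun v =>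
      (existsUnique_mem_S6_mem_closedNbhdT6 v).exists
  · exact pairwiseDisjoint_of_inter_subsingleton mem_closedNbhdT6_comm fun v _ hu _ hu' =>
      (existsUnique_mem_S6_mem_closedNbhdT6 v).unique hu hu'
end

section
/- Let G be a graph with vertex set {v_1, …, v_n} and let H be the bipartite graph constructed from G as in the eternal-domination reduction. If S is a dominating set of G, then D = {u_i : v_i ∈ S} ∪ {w} is a dominating set of H of size |S| + 1 whose induced subgraph in H is connected. -/
/-- The bipartite graph `H` of the eternal-domination reduction from a graph `G` on vertices
`v_1, …, v_n`. Vertices: `Sum.inl (Sum.inl i) = u_i`, `Sum.inl (Sum.inr i) = w_i`,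
`Sum.inr (Sum.inl j) = p_j` (pendant), `Sum.inr (Sum.inr ()) = w` (the extra vertex).
Edges: `u_i — w_j` iff `i = j` or `v_i ~ v_j` in `G`; `w — u_i` for all `i`; `w — p_j` for
all `j`; no other edges. -/
def Hred {n : ℕ} (G : SimpleGraph (Fin n)) :
    SimpleGraph ((Fin n ⊕ Fin n) ⊕ (Fin (n + 1) ⊕ Unit)) :=
  SimpleGraph.fromRel (fun a b =>
    match a, b with
    | Sum.inl (Sum.inl i), Sum.inl (Sum.inr j) => i = j ∨ G.Adj i j
    | Sum.inl (Sum.inl _), Sum.inr (Sum.inr _) => True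
    | Sum.inr (Sum.inr _), Sum.inr (Sum.inl _) => True
    | _, _ => False)

lemma Hred_adj_uw {n : ℕ} (G : SimpleGraph (Fin n)) (i : Fin n) :
    (Hred G).Adj (Sum.inl (Sum.inl i)) (Sum.inr (Sum.inr ())) := by
  simp [Hred, SimpleGraph.fromRel_adj]

lemma Hred_adj_wp {n : ℕ} (G : SimpleGraph (Fin n)) (j : Fin (n+1)) :
    (Hred G).Adj (Sum.inr (Sum.inl j)) (Sum.inr (Sum.inr ())) := by
  simp [Hred, SimpleGraph.fromRel_adj]

lemma Hred_adj_uwj {n : ℕ} (G : SimpleGraph (Fin n)) (i j : Fin n)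
    (h : i = j ∨ G.Adj i j) :
    (Hred G).Adj (Sum.inl (Sum.inr j)) (Sum.inl (Sum.inl i)) := by
  simp only [Hred, SimpleGraph.fromRel_adj]
  exact ⟨by simp, Or.inr h⟩

/-- if `S` is a dominating set of `G`, then `D = {u_i : v_i ∈ S} ∪ {w}` is a
dominating set of `H` of size `|S| + 1` whose induced subgraph in `H` is connected. -/
theorem stmt_13 {n : ℕ} (G : SimpleGraph (Fin n)) (S : Set (Fin n))
    (hS : ∀ v : Fin n, v ∉ S → ∃ u ∈ S, G.Adj v u) :
    let H := Hred G
    let D : Set ((Fin n ⊕ Fin n) ⊕ (Fin (n + 1) ⊕ Unit)) :=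
      (fun i => Sum.inl (Sum.inl i)) '' S ∪ {Sum.inr (Sum.inr ())}
    (∀ v, v ∉ D → ∃ u ∈ D, H.Adj v u) ∧
    (H.induce D).Connected ∧
    D.ncard = S.ncard + 1 := by
  intro H D
  have hwD : (Sum.inr (Sum.inr ()) : (Fin n ⊕ Fin n) ⊕ (Fin (n + 1) ⊕ Unit)) ∈ D :=
    Or.inr rfl
  refine ⟨?_, ?_, ?_⟩
  · rintro ((i | i) | (i | ⟨⟩)) hv
    · exact ⟨_, hwD, Hred_adj_uw G i⟩
    · -- v = w_i
      by_cases hi : i ∈ S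
      · exact ⟨_, Or.inl ⟨i, hi, rfl⟩, Hred_adj_uwj G i i (Or.inl rfl)⟩
      · obtain ⟨u, hu, hadj⟩ := hS i hi
        exact ⟨_, Or.inl ⟨u, hu, rfl⟩, Hred_adj_uwj G u i (Or.inr hadj.symm)⟩
    · exact ⟨_, hwD, Hred_adj_wp G i⟩
    · exact absurd hwD hv
  · have key : ∀ x : D, (H.induce D).Reachable x ⟨_, hwD⟩ := by
      rintro ⟨x, hx⟩
      rcases hx with ⟨i, hi, rfl⟩ | hx
      · exact SimpleGraph.Adj.reachable (by exact Hred_adj_uw G i)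
      · simp only [Set.mem_singleton_iff] at hx
        subst hx
        exact SimpleGraph.Reachable.refl _
    have : Nonempty D := ⟨⟨_, hwD⟩⟩
    exact SimpleGraph.Connected.mk (fun x y => (key x).trans (key y).symm)
  · have hinj : Function.Injective
        (fun i : Fin n => (Sum.inl (Sum.inl i) : (Fin n ⊕ Fin n) ⊕ (Fin (n + 1) ⊕ Unit))) := by
      intro a b h; simpa using h
    have hdisj : Disjoint ((fun i => (Sum.inl (Sum.inl i) : (Fin n ⊕ Fin n) ⊕ (Fin (n + 1) ⊕ Unit))) '' S)
        {Sum.inr (Sum.inr ())} := by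
      simp [Set.disjoint_singleton_right]
    rw [Set.ncard_union_eq hdisj (Set.toFinite _) (Set.toFinite _),
      Set.ncard_image_of_injective _ hinj, Set.ncard_singleton]
end

section
/- Let G be a graph with vertex set {v_1, …, v_n} and let H be the bipartite graph constructed from G as in the eternal-domination reduction. If D is a dominating set of H with w ∈ D and D ∩ P ≠ ∅, then S = {v_i : u_i ∈ D or w_i ∈ D} is a dominating set of G with |S| ≤ |D| − 2. -/
/-- if `D` is a dominating set of `H` containing the vertex `w` and at least one
pendant vertex of `P`, then `S = {v_i : u_i ∈ D or w_i ∈ D}` is a dominating set of `G` with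
`|S| ≤ |D| − 2`. -/
theorem stmt_14 {n : ℕ} (G : SimpleGraph (Fin n))
    (D : Set ((Fin n ⊕ Fin n) ⊕ (Fin (n + 1) ⊕ Unit)))
    (hD : ∀ v, v ∉ D → ∃ u ∈ D, (Hred G).Adj v u)
    (hw : Sum.inr (Sum.inr ()) ∈ D)
    (hP : ∃ j : Fin (n + 1), Sum.inr (Sum.inl j) ∈ D) :
    let S : Set (Fin n) := {i | Sum.inl (Sum.inl i) ∈ D ∨ Sum.inl (Sum.inr i) ∈ D}
    (∀ v : Fin n, v ∉ S → ∃ u ∈ S, G.Adj v u) ∧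
    S.ncard + 2 ≤ D.ncard := by
  intro S
  obtain ⟨j0, hj0⟩ := hP
  constructor
  · intro v hv
    have hwv : (Sum.inl (Sum.inr v) : (Fin n ⊕ Fin n) ⊕ (Fin (n + 1) ⊕ Unit)) ∉ D := by
      intro h; exact hv (Or.inr h)
    obtain ⟨u, huD, hadj⟩ := hD _ hwv
    rw [Hred, SimpleGraph.fromRel_adj] at hadj
    obtain ⟨hne, hrel⟩ := hadj
    rcases u with (j | j) | (j | j)
    · rcases hrel with h | h
      · exact h.elim
      · rcases h with rfl | h
        · exact absurd huD (fun hh => hv (Or.inl hh))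
        · exact ⟨j, Or.inl huD, h.symm⟩
    · rcases hrel with h | h <;> exact h.elim
    · rcases hrel with h | h <;> exact h.elim
    · rcases hrel with h | h <;> exact h.elim
  · -- cardinality
    have hfin : D.Finite := Set.toFinite D
    set D₁ : Set (Fin n ⊕ Fin n) := {x | Sum.inl x ∈ D} with hD₁
    have hS : S ⊆ Sum.elim id id '' D₁ := by
      rintro i (hi | hi)
      · exact ⟨Sum.inl i, hi, rfl⟩
      · exact ⟨Sum.inr i, hi, rfl⟩
    have h1 : S.ncard ≤ D₁.ncard := le_trans (Set.ncard_le_ncard hS (Set.toFinite _))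
      (Set.ncard_image_le (Set.toFinite _))
    have h2 : D₁.ncard = (Sum.inl '' D₁ : Set ((Fin n ⊕ Fin n) ⊕ (Fin (n + 1) ⊕ Unit))).ncard :=
      (Set.ncard_image_of_injective _ Sum.inl_injective).symm
    have hsub : (Sum.inl '' D₁) ∪ {Sum.inr (Sum.inl j0), Sum.inr (Sum.inr ())} ⊆ D := by
      rintro x (⟨y, hy, rfl⟩ | hx)
      · exact hy
      · rcases hx with rfl | rfl
        · exact hj0
        · exact hw
    have hdisj : Disjoint (Sum.inl '' D₁ : Set ((Fin n ⊕ Fin n) ⊕ (Fin (n + 1) ⊕ Unit)))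
        {Sum.inr (Sum.inl j0), Sum.inr (Sum.inr ())} := by
      rw [Set.disjoint_left]
      rintro x ⟨y, hy, rfl⟩ hx
      rcases hx with h | h <;> simp_all
    have hpair : ({Sum.inr (Sum.inl j0), Sum.inr (Sum.inr ())} :
        Set ((Fin n ⊕ Fin n) ⊕ (Fin (n + 1) ⊕ Unit))).ncard = 2 := by
      rw [Set.ncard_pair (by simp)]
    have h3 : ((Sum.inl '' D₁) ∪ {Sum.inr (Sum.inl j0), Sum.inr (Sum.inr ())}).ncard
        ≤ D.ncard := Set.ncard_le_ncard hsub hfin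
    rw [Set.ncard_union_eq hdisj (Set.toFinite _) (Set.toFinite _), hpair] at h3
    omega
end
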